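/- arXiv:2512.21451 — 2 statements merged into one kernel-verified Lean document; each statement's English description precedes it below -/
import Mathlib

section
/- Let f : ℝ^n → ℝ be a pdf and F : (-ε, ε) × ℝ^n → ℝ a family of positive pdfs with F(0,·) = f. Assume: for almost every x, t ↦ F(t,x) is twice differentiable on (-ε, ε); the first and second t-derivatives of the integrand x ↦ f(x) log(f(x)/F(t,x)) are dominated uniformly in t by integrable functions of x; the first and second t-derivatives of F(t,x) are dominated uniformly in t by integrable functions of x; and the tangent vector h(x) = ∂F/∂t(0,x) satisfies ∫ h(x)²/f(x) dx < ∞. Then the map t ↦ D_KL(f‖F(t,·)) is twice differentiable at 0 and its second derivative at 0 equals the Fisher–Rao metric g_f(h,h) = ∫ h(x)²/f(x) dx. -/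
/-!
Differentiating `D(t) = ∫ f log (f / F t)` under the integral sign gives
`D'(t) = -∫ f F'_t / F_t`, and differentiating once more gives
`D''(0) = ∫ (F'_0)² / f - ∫ F''_0`, where `∫ F''_0 = 0` because `∫ F_t = 1` for every `t`.

The domination hypotheses only say that for each fixed `t` the bound holds for almost every `x`;
since a derivative bounded on a dense set of times need not be bounded, they cannot be fed to the
dominated differentiation theorem directly. Instead, difference quotients show that the
`t`-derivatives are jointly measurable in `(t, x)`, so Fubini gives, for almost every `x`, the bound
for almost every `t`. The fundamental theorem of calculus turns this into a Lipschitz bound in `t`,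
which is what differentiation under the integral sign needs.
-/

open MeasureTheory Set Real Filter Topology Function
open scoped NNReal Interval

lemma HasDerivAt.const_mul_log_const_div {A : ℝ → ℝ} {A' c t : ℝ} (hA : HasDerivAt A A' t)
    (hc : c ≠ 0) (hAt : A t ≠ 0) :
    HasDerivAt (fun u => c * Real.log (c / A u)) (-(c * A' / A t)) t := by
  have h := (((hasDerivAt_const t c).div hA hAt).log (div_ne_zero hc hAt)).const_mul c
  refine h.congr_deriv ?_
  simp only [Pi.div_apply]
  field_simp
  ring

lemma HasDerivAt.neg_const_mul_div {A B : ℝ → ℝ} {B' c t : ℝ} (hA : HasDerivAt A (B t) t)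
    (hB : HasDerivAt B B' t) (hAt : A t ≠ 0) :
    HasDerivAt (fun u => -(c * B u / A u)) (-(c * (B' / A t - (B t / A t) ^ 2))) t := by
  simp only [mul_div_assoc]
  refine ((hB.div hA hAt).const_mul c).neg.congr_deriv ?_
  field_simp

lemma lipschitzOnWith_of_hasDerivAt_of_ae_abs_le {f f' : ℝ → ℝ} {a b : ℝ} {C : ℝ≥0}
    (hderiv : ∀ t ∈ Ioo a b, HasDerivAt f (f' t) t)
    (hbound : ∀ᵐ t ∂volume.restrict (Ioo a b), |f' t| ≤ C) :
    LipschitzOnWith C f (Ioo a b) := by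
  refine LipschitzOnWith.of_dist_le_mul fun s hs t ht => ?_
  have hsub : uIcc t s ⊆ Ioo a b := ordConnected_Ioo.uIcc_subset ht hs
  have hbound' : ∀ᵐ u, u ∈ Ι t s → ‖f' u‖ ≤ C :=
    ((ae_restrict_iff' measurableSet_Ioo).mp hbound).mono fun u hu hmem =>
      hu (hsub (Ioc_subset_Icc_self hmem))
  have hmeas : AEStronglyMeasurable f' (volume.restrict (Ι t s)) :=
    (measurable_deriv f).aestronglyMeasurable.congr <| ae_restrict_of_forall_mem measurableSet_uIoc
      fun u hu => (hderiv u (hsub (Ioc_subset_Icc_self hu))).deriv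
  have hint : IntervalIntegrable f' volume t s :=
    (intervalIntegrable_const (c := (C : ℝ))).mono_fun' hmeas
      ((ae_restrict_iff' measurableSet_uIoc).mpr hbound')
  rw [Real.dist_eq, Real.dist_eq, ← Real.norm_eq_abs,
    ← intervalIntegral.integral_eq_sub_of_hasDerivAt (fun u hu => hderiv u (hsub hu)) hint]
  exact intervalIntegral.norm_integral_le_of_norm_le_const_ae hbound'

section ParametricMeasurability

variable {X : Type*} [MeasurableSpace X] {μ : Measure X}

lemma aemeasurable_of_tendsto_ae_of_eventually {β ι : Type*} [TopologicalSpace β]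
    [TopologicalSpace.PseudoMetrizableSpace β] [MeasurableSpace β] [BorelSpace β]
    {l : Filter ι} [l.NeBot] [l.IsCountablyGenerated] {f : ι → X → β} {g : X → β}
    (hf : ∀ᶠ i in l, AEMeasurable (f i) μ)
    (hlim : ∀ᵐ x ∂μ, Tendsto (fun i => f i x) l (𝓝 (g x))) : AEMeasurable g μ := by
  obtain ⟨u, hu, hmeas⟩ := exists_seq_forall_of_frequently hf.frequently
  exact aemeasurable_of_tendsto_metrizable_ae' hmeas (hlim.mono fun x hx => hx.comp hu)

lemma aemeasurable_of_hasDerivAt {Φ : ℝ → X → ℝ} {Φ' : X → ℝ} {t₀ : ℝ}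
    (hΦ : ∀ᶠ t in 𝓝 t₀, AEMeasurable (Φ t) μ)
    (hderiv : ∀ᵐ x ∂μ, HasDerivAt (Φ · x) (Φ' x) t₀) : AEMeasurable Φ' μ := by
  refine aemeasurable_of_tendsto_ae_of_eventually (l := 𝓝[>] 0)
    (f := fun h x => h⁻¹ • (Φ (t₀ + h) x - Φ t₀ x)) ?_
    (hderiv.mono fun x hx => hx.tendsto_slope_zero_right)
  have hshift : Tendsto (t₀ + ·) (𝓝[>] 0) (𝓝 t₀) :=
    tendsto_nhdsWithin_of_tendsto_nhds (by simpa using (continuous_const_add t₀).tendsto 0)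
  filter_upwards [hshift.eventually hΦ] with h hh
  exact (hh.sub hΦ.self_of_nhds).const_smul h⁻¹

lemma quasiMeasurePreserving_add_fst [SFinite μ] {J K : Set ℝ} {h : ℝ}
    (hJK : MapsTo (· + h) J K) :
    Measure.QuasiMeasurePreserving (fun p : ℝ × X => (p.1 + h, p.2))
      ((volume.restrict J).prod μ) ((volume.restrict K).prod μ) :=
  QuasiMeasurePreserving.prodMap
    ((measurePreserving_add_right volume h).quasiMeasurePreserving.restrict hJK)
    (Measure.QuasiMeasurePreserving.id μ)

lemma aemeasurable_uncurry_of_continuousOn {ν : Measure ℝ}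
    {Φ : ℝ → X → ℝ} {a b : ℝ} (hab : a ≤ b) (hmeas : ∀ t ∈ Icc a b, Measurable (Φ t))
    (hcont : ∀ᵐ x ∂μ, ContinuousOn (Φ · x) (Icc a b)) :
    AEMeasurable (uncurry Φ) ((ν.restrict (Icc a b)).prod μ) := by
  classical
  set N := toMeasurable μ {x | ¬ ContinuousOn (Φ · x) (Icc a b)}
  set Ψ : ℝ → X → ℝ := fun t x => if x ∈ N then 0 else Φ (projIcc a b hab t) x
  have hΨ : Measurable (uncurry Ψ) := by
    refine measurable_uncurry_of_continuous_of_measurable (fun x => ?_) (fun t => ?_)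
    · by_cases hx : x ∈ N
      · simp [Ψ, hx, continuous_const]
      · simp only [Ψ, hx, if_false]
        have hcx : ContinuousOn (Φ · x) (Icc a b) := by
          by_contra h
          exact hx (subset_toMeasurable _ _ h)
        exact hcx.comp_continuous (continuous_subtype_val.comp continuous_projIcc)
          fun t => (projIcc a b hab t).2
    · exact measurable_const.ite (measurableSet_toMeasurable _ _)
        (hmeas _ (projIcc a b hab t).2)
  have hN : ∀ᵐ x ∂μ, x ∉ N := by
    simpa [ae_iff, N, measure_toMeasurable] using hcont
  refine ⟨uncurry Ψ, hΨ, ?_⟩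
  filter_upwards [Measure.quasiMeasurePreserving_fst.ae (ae_restrict_mem measurableSet_Icc),
    Measure.quasiMeasurePreserving_snd.ae hN] with p hp hpN
  change Φ p.1 p.2 = Ψ p.1 p.2
  simp [Ψ, hpN, projIcc_of_mem hab hp]

lemma aemeasurable_uncurry_of_hasDerivAt [SFinite μ] {Φ Φ' : ℝ → X → ℝ} {J K : Set ℝ}
    (hJ : MeasurableSet J) (hJK : ∀ᶠ h in 𝓝 0, MapsTo (· + h) J K)
    (hΦ : AEMeasurable (uncurry Φ) ((volume.restrict K).prod μ))
    (hderiv : ∀ᵐ x ∂μ, ∀ t ∈ J, HasDerivAt (Φ · x) (Φ' t x) t) :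
    AEMeasurable (uncurry Φ') ((volume.restrict J).prod μ) := by
  have hshift : ∀ h, MapsTo (· + h) J K →
      AEMeasurable (fun p : ℝ × X => Φ (p.1 + h) p.2) ((volume.restrict J).prod μ) :=
    fun h hh => hΦ.comp_quasiMeasurePreserving (quasiMeasurePreserving_add_fst hh)
  have h0 : AEMeasurable (fun p : ℝ × X => Φ p.1 p.2) ((volume.restrict J).prod μ) := by
    simpa using hshift 0 hJK.self_of_nhds
  refine aemeasurable_of_tendsto_ae_of_eventually (l := 𝓝[>] 0)
    (f := fun h p => h⁻¹ • (Φ (p.1 + h) p.2 - Φ p.1 p.2)) ?_ ?_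
  · filter_upwards [nhdsWithin_le_nhds hJK] with h hh
    exact ((hshift h hh).sub h0).const_smul h⁻¹
  · filter_upwards [Measure.quasiMeasurePreserving_fst.ae (ae_restrict_mem hJ),
      Measure.quasiMeasurePreserving_snd.ae hderiv] with p hp hd
    exact (hd p.1 hp).tendsto_slope_zero_right

lemma ae_ae_swap_of_nullMeasurableSet {Y : Type*} [MeasurableSpace Y] {ν : Measure Y}
    [SFinite μ] [SFinite ν] {p : X → Y → Prop}
    (hp : NullMeasurableSet {z : X × Y | p z.1 z.2} (μ.prod ν)) (h : ∀ᵐ x ∂μ, ∀ᵐ y ∂ν, p x y) :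
    ∀ᵐ y ∂ν, ∀ᵐ x ∂μ, p x y := by
  obtain ⟨s, hsp, hs, hsae⟩ := hp.exists_measurable_subset_ae_eq
  have hmem : ∀ᵐ x ∂μ, ∀ᵐ y ∂ν, (x, y) ∈ s := by
    filter_upwards [h, Measure.ae_ae_of_ae_prod hsae.mem_iff] with x hx hxs
    filter_upwards [hx, hxs] with y hy hys
    exact hys.mpr hy
  filter_upwards [(Measure.ae_ae_comm (p := fun x y => (x, y) ∈ s) hs).mp hmem] with y hy
  filter_upwards [hy] with x hx
  exact hsp hx

end ParametricMeasurability

section ParametricIntegral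

variable {X : Type*} [MeasurableSpace X] {μ : Measure X} [SFinite μ]

theorem hasDerivAt_integral_of_forall_ae_deriv_le {Φ Φ' : ℝ → X → ℝ} {g : X → ℝ} {s : Set ℝ}
    {t₀ : ℝ} (hs : s ∈ 𝓝 t₀) (hΦ : AEMeasurable (uncurry Φ) ((volume.restrict s).prod μ))
    (hΦ_meas : ∀ t ∈ s, AEMeasurable (Φ t) μ) (hΦ_int : Integrable (Φ t₀) μ)
    (hderiv : ∀ᵐ x ∂μ, ∀ t ∈ s, HasDerivAt (Φ · x) (Φ' t x) t)
    (hbound : ∀ t ∈ s, ∀ᵐ x ∂μ, |Φ' t x| ≤ g x) (hg : Integrable g μ) :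
    Integrable (Φ' t₀) μ ∧ HasDerivAt (fun t => ∫ x, Φ t x ∂μ) (∫ x, Φ' t₀ x ∂μ) t₀ := by
  obtain ⟨δ, hδ, hball⟩ := Metric.mem_nhds_iff.mp hs
  rw [Real.ball_eq_Ioo] at hball
  set J := Ioo (t₀ - δ / 2) (t₀ + δ / 2)
  have hJ : J ⊆ s := (Ioo_subset_Ioo (by linarith) (by linarith)).trans hball
  have hJK : ∀ᶠ h in 𝓝 0, MapsTo (· + h) J s := by
    filter_upwards [Ioo_mem_nhds (show -(δ / 2) < 0 by linarith) (half_pos hδ)] with h hh t ht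
    exact hball ⟨by linarith [hh.1, ht.1], by linarith [hh.2, ht.2]⟩
  have hΦ' : AEMeasurable (uncurry Φ') ((volume.restrict J).prod μ) :=
    aemeasurable_uncurry_of_hasDerivAt measurableSet_Ioo hJK hΦ
      (hderiv.mono fun x hx t ht => hx t (hJ ht))
  have hswap : ∀ᵐ x ∂μ, ∀ᵐ t ∂volume.restrict J, |Φ' t x| ≤ g x :=
    ae_ae_swap_of_nullMeasurableSet
      (nullMeasurableSet_le hΦ'.abs
        (hg.aemeasurable.comp_quasiMeasurePreserving Measure.quasiMeasurePreserving_snd))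
      (ae_restrict_of_forall_mem measurableSet_Ioo fun t ht => hbound t (hJ ht))
  have hlip : ∀ᵐ x ∂μ, LipschitzOnWith (Real.nnabs (g x)) (Φ · x) J := by
    filter_upwards [hderiv, hswap] with x hx hxg
    exact lipschitzOnWith_of_hasDerivAt_of_ae_abs_le (fun t ht => hx t (hJ ht))
      (hxg.mono fun t ht => ht.trans (by simp [le_abs_self]))
  have hderiv₀ : ∀ᵐ x ∂μ, HasDerivAt (Φ · x) (Φ' t₀ x) t₀ :=
    hderiv.mono fun x hx => hx t₀ (mem_of_mem_nhds hs)
  have hΦ_ev : ∀ᶠ t in 𝓝 t₀, AEMeasurable (Φ t) μ := mem_of_superset hs hΦ_meas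
  exact hasDerivAt_integral_of_dominated_loc_of_lip (Ioo_mem_nhds (by linarith) (by linarith))
    (hΦ_ev.mono fun t ht => ht.aestronglyMeasurable) hΦ_int
    (aemeasurable_of_hasDerivAt hΦ_ev hderiv₀).aestronglyMeasurable hlip hg hderiv₀

theorem integral_eq_zero_of_forall_ae_deriv_le {Φ Φ' : ℝ → X → ℝ} {g : X → ℝ} {s : Set ℝ} {t₀ C : ℝ}
    (hs : s ∈ 𝓝 t₀) (hΦ : AEMeasurable (uncurry Φ) ((volume.restrict s).prod μ))
    (hΦ_meas : ∀ t ∈ s, AEMeasurable (Φ t) μ) (hΦ_int : Integrable (Φ t₀) μ)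
    (hderiv : ∀ᵐ x ∂μ, ∀ t ∈ s, HasDerivAt (Φ · x) (Φ' t x) t)
    (hbound : ∀ t ∈ s, ∀ᵐ x ∂μ, |Φ' t x| ≤ g x) (hg : Integrable g μ)
    (hconst : ∀ t ∈ s, ∫ x, Φ t x ∂μ = C) :
    Integrable (Φ' t₀) μ ∧ ∫ x, Φ' t₀ x ∂μ = 0 := by
  obtain ⟨hint, hd⟩ :=
    hasDerivAt_integral_of_forall_ae_deriv_le hs hΦ hΦ_meas hΦ_int hderiv hbound hg
  exact ⟨hint, hd.unique ((hasDerivAt_const t₀ C).congr_of_eventuallyEq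
    (mem_of_superset hs hconst))⟩

variable {f : X → ℝ} {F F' F'' : ℝ → X → ℝ} {c d : ℝ}

lemma exists_mem_nhds_aemeasurable_uncurry (hF_meas : ∀ t ∈ Ioo c d, Measurable (F t))
    (hDeriv : ∀ᵐ x ∂μ, ∀ t ∈ Ioo c d, HasDerivAt (F · x) (F' t x) t) {t₀ : ℝ}
    (ht₀ : t₀ ∈ Ioo c d) :
    ∃ s ∈ 𝓝 t₀, s ⊆ Ioo c d ∧ AEMeasurable (uncurry F) ((volume.restrict s).prod μ) ∧
      AEMeasurable (uncurry F') ((volume.restrict s).prod μ) := by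
  obtain ⟨hc, hd⟩ := ht₀
  obtain ⟨r, hr, hrc, hrd⟩ : ∃ r > 0, 3 * r ≤ t₀ - c ∧ 3 * r ≤ d - t₀ :=
    ⟨min (t₀ - c) (d - t₀) / 3, div_pos (lt_min (sub_pos.2 hc) (sub_pos.2 hd)) three_pos,
      by linarith [min_le_left (t₀ - c) (d - t₀)], by linarith [min_le_right (t₀ - c) (d - t₀)]⟩
  set K := Icc (t₀ - 2 * r) (t₀ + 2 * r)
  have hK : K ⊆ Ioo c d := Icc_subset_Ioo (by linarith) (by linarith)
  have hFK : AEMeasurable (uncurry F) ((volume.restrict K).prod μ) :=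
    aemeasurable_uncurry_of_continuousOn (by linarith) (fun t ht => hF_meas t (hK ht))
      (hDeriv.mono fun x hx t ht => (hx t (hK ht)).continuousAt.continuousWithinAt)
  have hsK : Icc (t₀ - r) (t₀ + r) ⊆ K := Icc_subset_Icc (by linarith) (by linarith)
  refine ⟨Icc (t₀ - r) (t₀ + r), Icc_mem_nhds (by linarith) (by linarith), hsK.trans hK,
    hFK.mono' ((Measure.absolutelyContinuous_of_le (Measure.restrict_mono_set volume hsK)).prod
      Measure.AbsolutelyContinuous.rfl),
    aemeasurable_uncurry_of_hasDerivAt measurableSet_Icc ?_ hFK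
      (hDeriv.mono fun x hx t ht => hx t (hK (hsK ht)))⟩
  filter_upwards [Ioo_mem_nhds (neg_neg_of_pos hr) hr] with h hh t ht
  exact ⟨by linarith [hh.1, ht.1], by linarith [hh.2, ht.2]⟩

theorem hasDerivAt_integral_mul_log_div {g₁ : X → ℝ} (hf_meas : Measurable f)
    (hf_pos : ∀ x, 0 < f x) (hF_pos : ∀ t ∈ Ioo c d, ∀ x, 0 < F t x)
    (hF_meas : ∀ t ∈ Ioo c d, Measurable (F t))
    (hDeriv : ∀ᵐ x ∂μ, ∀ t ∈ Ioo c d, HasDerivAt (F · x) (F' t x) t)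
    (hInt : ∀ t ∈ Ioo c d, Integrable (fun x => f x * log (f x / F t x)) μ)
    (hg₁ : Integrable g₁ μ) (hDom₁ : ∀ t ∈ Ioo c d, ∀ᵐ x ∂μ, |f x * F' t x / F t x| ≤ g₁ x) :
    ∀ t ∈ Ioo c d, HasDerivAt (fun u => ∫ x, f x * log (f x / F u x) ∂μ)
      (∫ x, -(f x * F' t x / F t x) ∂μ) t := by
  intro t ht
  obtain ⟨s, hs, hsI, hFs, -⟩ := exists_mem_nhds_aemeasurable_uncurry hF_meas hDeriv ht
  have hfs : AEMeasurable (fun p : ℝ × X => f p.2) ((volume.restrict s).prod μ) :=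
    (hf_meas.comp measurable_snd).aemeasurable
  refine (hasDerivAt_integral_of_forall_ae_deriv_le (Φ := fun u x => f x * log (f x / F u x)) hs
    (hfs.mul (measurable_log.comp_aemeasurable (hfs.div hFs)))
    (fun u hu =>
      (hf_meas.mul (measurable_log.comp (hf_meas.div (hF_meas u (hsI hu))))).aemeasurable)
    (hInt t ht) ?_ (fun u hu => (hDom₁ u (hsI hu)).mono fun x hx => by rwa [abs_neg]) hg₁).2
  filter_upwards [hDeriv] with x hx u hu
  exact HasDerivAt.const_mul_log_const_div (hx u (hsI hu)) (hf_pos x).ne' (hF_pos u (hsI hu) x).ne'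

theorem integral_eq_zero_of_hasDerivAt_of_integral_eq_one {G₁ : X → ℝ}
    (hF_meas : ∀ t ∈ Ioo c d, Measurable (F t)) (hF_norm : ∀ t ∈ Ioo c d, ∫ x, F t x ∂μ = 1)
    (hDeriv : ∀ᵐ x ∂μ, ∀ t ∈ Ioo c d, HasDerivAt (F · x) (F' t x) t)
    (hG₁ : Integrable G₁ μ) (hDomF₁ : ∀ t ∈ Ioo c d, ∀ᵐ x ∂μ, |F' t x| ≤ G₁ x) :
    ∀ t ∈ Ioo c d, Integrable (F' t) μ ∧ ∫ x, F' t x ∂μ = 0 := by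
  intro t ht
  obtain ⟨s, hs, hsI, hFs, -⟩ := exists_mem_nhds_aemeasurable_uncurry hF_meas hDeriv ht
  exact integral_eq_zero_of_forall_ae_deriv_le hs hFs
    (fun u hu => (hF_meas u (hsI hu)).aemeasurable)
    (Integrable.of_integral_ne_zero (by simp [hF_norm t ht]))
    (hDeriv.mono fun x hx u hu => hx u (hsI hu)) (fun u hu => hDomF₁ u (hsI hu)) hG₁
    (fun u hu => hF_norm u (hsI hu))

theorem integral_eq_zero_of_hasDerivAt_of_integral_eq_zero {G₂ : X → ℝ}
    (hF_meas : ∀ t ∈ Ioo c d, Measurable (F t))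
    (hDeriv : ∀ᵐ x ∂μ, ∀ t ∈ Ioo c d, HasDerivAt (F · x) (F' t x) t)
    (hDeriv2 : ∀ᵐ x ∂μ, ∀ t ∈ Ioo c d, HasDerivAt (F' · x) (F'' t x) t)
    (hF' : ∀ t ∈ Ioo c d, Integrable (F' t) μ ∧ ∫ x, F' t x ∂μ = 0)
    (hG₂ : Integrable G₂ μ) (hDomF₂ : ∀ t ∈ Ioo c d, ∀ᵐ x ∂μ, |F'' t x| ≤ G₂ x) :
    ∀ t ∈ Ioo c d, Integrable (F'' t) μ ∧ ∫ x, F'' t x ∂μ = 0 := by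
  intro t ht
  obtain ⟨s, hs, hsI, -, hF's⟩ := exists_mem_nhds_aemeasurable_uncurry hF_meas hDeriv ht
  exact integral_eq_zero_of_forall_ae_deriv_le hs hF's (fun u hu => (hF' u (hsI hu)).1.aemeasurable)
    (hF' t ht).1 (hDeriv2.mono fun x hx u hu => hx u (hsI hu)) (fun u hu => hDomF₂ u (hsI hu))
    hG₂ (fun u hu => (hF' u (hsI hu)).2)

theorem hasDerivAt_integral_neg_mul_div {g₁ g₂ : X → ℝ} (hf_meas : Measurable f)
    (hF_pos : ∀ t ∈ Ioo c d, ∀ x, 0 < F t x) (hF_meas : ∀ t ∈ Ioo c d, Measurable (F t))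
    (hDeriv : ∀ᵐ x ∂μ, ∀ t ∈ Ioo c d, HasDerivAt (F · x) (F' t x) t)
    (hDeriv2 : ∀ᵐ x ∂μ, ∀ t ∈ Ioo c d, HasDerivAt (F' · x) (F'' t x) t)
    (hg₁ : Integrable g₁ μ) (hDom₁ : ∀ t ∈ Ioo c d, ∀ᵐ x ∂μ, |f x * F' t x / F t x| ≤ g₁ x)
    (hg₂ : Integrable g₂ μ)
    (hDom₂ : ∀ t ∈ Ioo c d, ∀ᵐ x ∂μ, |f x * (F'' t x / F t x - (F' t x / F t x) ^ 2)| ≤ g₂ x) :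
    ∀ t ∈ Ioo c d, Integrable (fun x => -(f x * (F'' t x / F t x - (F' t x / F t x) ^ 2))) μ ∧
      HasDerivAt (fun u => ∫ x, -(f x * F' u x / F u x) ∂μ)
        (∫ x, -(f x * (F'' t x / F t x - (F' t x / F t x) ^ 2)) ∂μ) t := by
  intro t ht
  obtain ⟨s, hs, hsI, hFs, hF's⟩ := exists_mem_nhds_aemeasurable_uncurry hF_meas hDeriv ht
  have hmeas : ∀ u ∈ Ioo c d, AEMeasurable (fun x => -(f x * F' u x / F u x)) μ := by
    intro u hu
    have hF'u : AEMeasurable (F' u) μ := aemeasurable_of_hasDerivAt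
      (mem_of_superset (isOpen_Ioo.mem_nhds hu) fun v hv => (hF_meas v hv).aemeasurable)
      (hDeriv.mono fun x hx => hx u hu)
    exact ((hf_meas.aemeasurable.mul hF'u).div (hF_meas u hu).aemeasurable).neg
  have hfs : AEMeasurable (fun p : ℝ × X => f p.2) ((volume.restrict s).prod μ) :=
    (hf_meas.comp measurable_snd).aemeasurable
  refine hasDerivAt_integral_of_forall_ae_deriv_le (Φ := fun u x => -(f x * F' u x / F u x)) hs
    ((hfs.mul hF's).div hFs).neg (fun u hu => hmeas u (hsI hu))
    (hg₁.mono' (hmeas t ht).aestronglyMeasurable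
      ((hDom₁ t ht).mono fun x hx => by rwa [norm_neg, Real.norm_eq_abs])) ?_
    (fun u hu => (hDom₂ u (hsI hu)).mono fun x hx => by rwa [abs_neg]) hg₂
  filter_upwards [hDeriv, hDeriv2] with x hx hx2 u hu
  exact HasDerivAt.neg_const_mul_div (hx u (hsI hu)) (hx2 u (hsI hu)) (hF_pos u (hsI hu) x).ne'

end ParametricIntegral

theorem KL_second_derivative_eq_fisher_rao_general
    {n : ℕ} (ε : ℝ) (hε : 0 < ε)
    (f : (Fin n → ℝ) → ℝ)
    (hf_meas : Measurable f) (hf_pos : ∀ x, 0 < f x)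
    (F F' F'' : ℝ → (Fin n → ℝ) → ℝ)
    (hF0 : F 0 = f)
    (hF_pos : ∀ t ∈ Ioo (-ε) ε, ∀ x, 0 < F t x)
    (hF_meas : ∀ t ∈ Ioo (-ε) ε, Measurable (F t))
    (hF_norm : ∀ t ∈ Ioo (-ε) ε, ∫ x, F t x = 1)
    -- a.e. twice differentiability in t
    (hDeriv : ∀ᵐ x : Fin n → ℝ, ∀ t ∈ Ioo (-ε) ε,
      HasDerivAt (fun u => F u x) (F' t x) t)
    (hDeriv2 : ∀ᵐ x : Fin n → ℝ, ∀ t ∈ Ioo (-ε) ε,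
      HasDerivAt (fun u => F' u x) (F'' t x) t)
    -- integrability of the KL integrand for each t
    (hInt : ∀ t ∈ Ioo (-ε) ε,
      Integrable (fun x => f x * Real.log (f x / F t x)))
    -- uniform-in-t domination of the first and second t-derivatives of the integrand
    (g₁ g₂ : (Fin n → ℝ) → ℝ) (hg₁ : Integrable g₁) (hg₂ : Integrable g₂)
    (hDom₁ : ∀ t ∈ Ioo (-ε) ε, ∀ᵐ x : Fin n → ℝ,
      |f x * F' t x / F t x| ≤ g₁ x)
    (hDom₂ : ∀ t ∈ Ioo (-ε) ε, ∀ᵐ x : Fin n → ℝ,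
      |f x * (F'' t x / F t x - (F' t x / F t x) ^ 2)| ≤ g₂ x)
    -- uniform-in-t domination of the first and second t-derivatives of F
    (G₁ G₂ : (Fin n → ℝ) → ℝ) (hG₁ : Integrable G₁) (hG₂ : Integrable G₂)
    (hDomF₁ : ∀ t ∈ Ioo (-ε) ε, ∀ᵐ x : Fin n → ℝ, |F' t x| ≤ G₁ x)
    (hDomF₂ : ∀ t ∈ Ioo (-ε) ε, ∀ᵐ x : Fin n → ℝ, |F'' t x| ≤ G₂ x) :
    ∃ D' : ℝ → ℝ,
      (∀ᶠ t in nhds 0,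
        HasDerivAt (fun u => ∫ x, f x * Real.log (f x / F u x)) (D' t) t) ∧
      HasDerivAt D' (∫ x, F' 0 x ^ 2 / f x) 0 := by
  have h0 : (0 : ℝ) ∈ Ioo (-ε) ε := ⟨neg_lt_zero.mpr hε, hε⟩
  have hF' := integral_eq_zero_of_hasDerivAt_of_integral_eq_one hF_meas hF_norm hDeriv hG₁ hDomF₁
  obtain ⟨hF''_int, hF''_zero⟩ :=
    integral_eq_zero_of_hasDerivAt_of_integral_eq_zero hF_meas hDeriv hDeriv2 hF' hG₂ hDomF₂ 0 h0
  obtain ⟨hφ_int, hφ⟩ := hasDerivAt_integral_neg_mul_div hf_meas hF_pos hF_meas hDeriv hDeriv2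
    hg₁ hDom₁ hg₂ hDom₂ 0 h0
  refine ⟨fun t => ∫ x, -(f x * F' t x / F t x), mem_of_superset (isOpen_Ioo.mem_nhds h0)
    (hasDerivAt_integral_mul_log_div hf_meas hf_pos hF_pos hF_meas hDeriv hInt hg₁ hDom₁), ?_⟩
  convert hφ using 1
  calc ∫ x, F' 0 x ^ 2 / f x
      = ∫ x, (-(f x * (F'' 0 x / F 0 x - (F' 0 x / F 0 x) ^ 2)) + F'' 0 x) := by
        congr 1
        funext x
        have hfx := (hf_pos x).ne'
        rw [hF0]
        field_simp
        ring
    _ = ∫ x, -(f x * (F'' 0 x / F 0 x - (F' 0 x / F 0 x) ^ 2)) := by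
        rw [integral_add hφ_int hF''_int, hF''_zero, add_zero]

/-- Fisher information as the second derivative of the KL divergence:
along a smooth curve `F(t,·)` of positive pdfs through `f` (with suitable domination
hypotheses), `t ↦ D_KL(f ‖ F(t,·))` is twice differentiable at `0` and its second
derivative at `0` equals `g_f(h,h) = ∫ h²/f`, where `h = ∂F/∂t(0,·)`. -/
theorem KL_second_derivative_eq_fisher_rao
    {n : ℕ} (hn : 1 ≤ n) (ε : ℝ) (hε : 0 < ε)
    (f : (Fin n → ℝ) → ℝ)
    (hf_meas : Measurable f) (hf_pos : ∀ x, 0 < f x)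
    (hf_norm : ∫ x, f x = 1)
    (F F' F'' : ℝ → (Fin n → ℝ) → ℝ)
    (hF0 : F 0 = f)
    (hF_pos : ∀ t ∈ Ioo (-ε) ε, ∀ x, 0 < F t x)
    (hF_meas : ∀ t ∈ Ioo (-ε) ε, Measurable (F t))
    (hF_norm : ∀ t ∈ Ioo (-ε) ε, ∫ x, F t x = 1)
    -- a.e. twice differentiability in t
    (hDeriv : ∀ᵐ x : Fin n → ℝ, ∀ t ∈ Ioo (-ε) ε,
      HasDerivAt (fun u => F u x) (F' t x) t)
    (hDeriv2 : ∀ᵐ x : Fin n → ℝ, ∀ t ∈ Ioo (-ε) ε,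
      HasDerivAt (fun u => F' u x) (F'' t x) t)
    -- integrability of the KL integrand for each t
    (hInt : ∀ t ∈ Ioo (-ε) ε,
      Integrable (fun x => f x * Real.log (f x / F t x)))
    -- uniform-in-t domination of the first and second t-derivatives of the integrand
    (g₁ g₂ : (Fin n → ℝ) → ℝ) (hg₁ : Integrable g₁) (hg₂ : Integrable g₂)
    (hDom₁ : ∀ t ∈ Ioo (-ε) ε, ∀ᵐ x : Fin n → ℝ,
      |f x * F' t x / F t x| ≤ g₁ x)
    (hDom₂ : ∀ t ∈ Ioo (-ε) ε, ∀ᵐ x : Fin n → ℝ,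
      |f x * (F'' t x / F t x - (F' t x / F t x) ^ 2)| ≤ g₂ x)
    -- uniform-in-t domination of the first and second t-derivatives of F
    (G₁ G₂ : (Fin n → ℝ) → ℝ) (hG₁ : Integrable G₁) (hG₂ : Integrable G₂)
    (hDomF₁ : ∀ t ∈ Ioo (-ε) ε, ∀ᵐ x : Fin n → ℝ, |F' t x| ≤ G₁ x)
    (hDomF₂ : ∀ t ∈ Ioo (-ε) ε, ∀ᵐ x : Fin n → ℝ, |F'' t x| ≤ G₂ x)
    -- the tangent vector h = F'(0,·) has finite Fisher–Rao length
    (h_sq : Integrable (fun x => F' 0 x ^ 2 / f x)) :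
    ∃ D' : ℝ → ℝ,
      (∀ᶠ t in nhds 0,
        HasDerivAt (fun u => ∫ x, f x * Real.log (f x / F u x)) (D' t) t) ∧
      HasDerivAt D' (∫ x, F' 0 x ^ 2 / f x) 0 :=
  KL_second_derivative_eq_fisher_rao_general ε hε f hf_meas hf_pos F F' F'' hF0 hF_pos hF_meas
    hF_norm hDeriv hDeriv2 hInt g₁ g₂ hg₁ hg₂ hDom₁ hDom₂ G₁ G₂ hG₁ hG₂ hDomF₁ hDomF₂
end

section
/- Let μ be the probability measure on ℝ^n with pdf f, let s : ℝ^n → ℝ^d be the vector of efficient score functions with each component in L²(μ), and suppose the d×d matrix G = ∫ s(x) s(x)ᵀ dμ(x) is positive definite. Let ψ : ℝ^n → ℝ^d be any influence function with each component in L²(μ) satisfying the unit-correlation identity ∫ ψ(x) s(x)ᵀ dμ(x) = I_d (the d×d identity matrix). Then the covariance matrix of ψ dominates G⁻¹ in the Loewner order: the matrix ∫ ψ(x) ψ(x)ᵀ dμ(x) − G⁻¹ is positive semidefinite. -/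
/-!
The functions `ψ₁, …, ψ_d, s₁, …, s_d` are vectors in the Hilbert space `L²(μ)`, so their Gram
matrix is positive semidefinite. By the unit-correlation identity this Gram matrix is the block
matrix `[[Ψ, I], [I, G]]`, and since `G` is positive definite, positive semidefiniteness of the
block matrix is equivalent to that of its Schur complement `Ψ - I G⁻¹ I = Ψ - G⁻¹`.
-/

open Matrix

namespace MeasureTheory

variable {X ι κ : Type*} [MeasurableSpace X] (μ : Measure X)

noncomputable def integralGram (f : ι → X → ℝ) (g : κ → X → ℝ) : Matrix ι κ ℝ :=
  of fun i j => ∫ x, f i x * g j x ∂μ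

theorem integralGram_eq_gram {f : ι → X → ℝ} (hf : ∀ i, MemLp (f i) 2 μ) :
    integralGram μ f f = gram ℝ fun i => (hf i).toLp (f i) := by
  ext i j
  rw [gram_apply, L2.inner_def]
  refine integral_congr_ae ?_
  filter_upwards [(hf i).coeFn_toLp, (hf j).coeFn_toLp] with x hi hj
  simp [hi, hj, mul_comm]

theorem posSemidef_integralGram [Finite ι] {f : ι → X → ℝ} (hf : ∀ i, MemLp (f i) 2 μ) :
    (integralGram μ f f).PosSemidef :=
  integralGram_eq_gram μ hf ▸ posSemidef_gram ℝ _

theorem integralGram_sum_elim (f : ι → X → ℝ) (g : κ → X → ℝ) :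
    integralGram μ (Sum.elim f g) (Sum.elim f g) =
      fromBlocks (integralGram μ f f) (integralGram μ f g)
        (integralGram μ f g)ᴴ (integralGram μ g g) := by
  ext (i | i) (j | j) <;> simp [integralGram, mul_comm]

theorem posSemidef_integralGram_sub_mul_inv_mul [Fintype ι] [Fintype κ] [DecidableEq κ]
    {f : ι → X → ℝ} {g : κ → X → ℝ} (hf : ∀ i, MemLp (f i) 2 μ) (hg : ∀ j, MemLp (g j) 2 μ)
    (hG : (integralGram μ g g).PosDef) :
    (integralGram μ f f - integralGram μ f g * (integralGram μ g g)⁻¹ *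
      (integralGram μ f g)ᴴ).PosSemidef := by
  have := hG.isUnit.invertible
  rw [← PosDef.fromBlocks₂₂ _ _ hG, ← integralGram_sum_elim]
  exact posSemidef_integralGram μ (by rintro (i | j) <;> simp [hf, hg])

end MeasureTheory

open MeasureTheory

theorem covariate_cramer_rao_lower_bound_general
    {d n : ℕ}
    (μ : Measure (Fin n → ℝ))
    (s : Fin d → (Fin n → ℝ) → ℝ)
    (hs_L2 : ∀ i, MemLp (s i) 2 μ)
    (G : Matrix (Fin d) (Fin d) ℝ)
    (hG : G = fun i j => ∫ x, s i x * s j x ∂μ)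
    (hG_posdef : G.PosDef)
    (ψ : Fin d → (Fin n → ℝ) → ℝ)
    (hψ_L2 : ∀ i, MemLp (ψ i) 2 μ)
    (hψ_corr : ∀ i j, ∫ x, ψ i x * s j x ∂μ = (1 : Matrix (Fin d) (Fin d) ℝ) i j) :
    Matrix.PosSemidef ((Matrix.of fun i j => ∫ x, ψ i x * ψ j x ∂μ) - G⁻¹) := by
  have hcross : integralGram μ ψ s = 1 := Matrix.ext hψ_corr
  subst hG
  have h := posSemidef_integralGram_sub_mul_inv_mul μ hψ_L2 hs_L2 hG_posdef
  rwa [hcross, conjTranspose_one, one_mul, mul_one] at h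

/-- Covariate Cramér–Rao lower bound: if `G = ∫ s sᵀ dμ` is positive
definite and the influence function `ψ` satisfies the unit-correlation identity
`∫ ψ sᵀ dμ = I`, then `∫ ψ ψᵀ dμ − G⁻¹` is positive semidefinite
(i.e. `AsyCov(θ̂) ⪰ G⁻¹` in the Loewner order). -/
theorem covariate_cramer_rao_lower_bound
    {d n : ℕ} (hd : 1 ≤ d) (hn : 1 ≤ n)
    (f : (Fin n → ℝ) → ℝ)
    (hf_meas : Measurable f) (hf_pos : ∀ x, 0 < f x)
    (hf_norm : ∫ x, f x = 1)
    (μ : Measure (Fin n → ℝ))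
    (hμ : μ = volume.withDensity (fun x => ENNReal.ofReal (f x)))
    (s : Fin d → (Fin n → ℝ) → ℝ)
    (hs_L2 : ∀ i, MemLp (s i) 2 μ)
    (G : Matrix (Fin d) (Fin d) ℝ)
    (hG : G = fun i j => ∫ x, s i x * s j x ∂μ)
    (hG_posdef : G.PosDef)
    (ψ : Fin d → (Fin n → ℝ) → ℝ)
    (hψ_L2 : ∀ i, MemLp (ψ i) 2 μ)
    (hψ_corr : ∀ i j, ∫ x, ψ i x * s j x ∂μ = (1 : Matrix (Fin d) (Fin d) ℝ) i j) :
    Matrix.PosSemidef ((Matrix.of fun i j => ∫ x, ψ i x * ψ j x ∂μ) - G⁻¹) :=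
  covariate_cramer_rao_lower_bound_general μ s hs_L2 G hG hG_posdef ψ hψ_L2 hψ_corr
end
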